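/- arXiv:1512.02715 — 5 statements merged into one kernel-verified Lean document; each statement's English description precedes it below -/
import Mathlib

section
/- Let $[\alpha,\beta]$ be a compact interval and let $f,g:[\alpha,\beta]\to\mathbb{R}$ be absolutely continuous functions with $g$ convex. If $f(\alpha)=g(\alpha)$, $f(\beta)=g(\beta)$, and $f(x)<g(x)$ for all $x\in(\alpha,\beta)$, then $\|g'\|_{L^\infty([\alpha,\beta])}\le\|f'\|_{L^\infty([\alpha,\beta])}$. -/
open MeasureTheory Set intervalIntegral
open scoped NNReal

/-!
Put `K = ‖f'‖_∞`, so that `f` is `K`-Lipschitz on `[α, β]`. Since `f ≤ g` with equality at the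
endpoints, the chord of `g` over `[s, β]` has slope at most that of `f`, hence at most `K`, and the
chord of `g` over `[α, u]` has slope at least `-K`. Slopes of chords of a convex function increase
with both endpoints, so every chord of `g` over `[s, u] ⊆ [α, β]` has slope in `[-K, K]`: `g` is
`K`-Lipschitz as well. By Lebesgue's differentiation theorem `g'` is the derivative of `g` at almost
every point, where it is therefore bounded by `K`.
-/

section AbsolutelyContinuous

variable {E : Type*} [NormedAddCommGroup E] [NormedSpace ℝ E]
  {f f' : ℝ → E} {a b : ℝ} {K : ℝ≥0}

theorem lipschitzOnWith_of_eq_integral (hf' : IntervalIntegrable f' volume a b)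
    (hf : ∀ x ∈ Icc a b, f x = f a + ∫ t in a..x, f' t)
    (hK : ∀ᵐ t ∂volume.restrict (Icc a b), ‖f' t‖ ≤ K) :
    LipschitzOnWith K f (Icc a b) := by
  refine LipschitzOnWith.of_dist_le_mul fun x hx y hy => ?_
  have hint : ∀ z ∈ Icc a b, IntervalIntegrable f' volume a z := fun z hz =>
    hf'.mono_set (uIcc_subset_uIcc_left (Icc_subset_uIcc hz))
  have hbound : ∀ᵐ t, t ∈ uIoc y x → ‖f' t‖ ≤ K := by
    filter_upwards [(ae_restrict_iff' measurableSet_Icc).1 hK] with t ht hty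
    exact ht (uIcc_subset_Icc hy hx (uIoc_subset_uIcc hty))
  rw [hf x hx, hf y hy, dist_add_left, dist_eq_norm,
    integral_interval_sub_left (hint x hx) (hint y hy), Real.dist_eq]
  exact norm_integral_le_of_norm_le_const_ae hbound

theorem eLpNorm_top_le_of_lipschitzOnWith_of_eq_integral [CompleteSpace E]
    (hf' : IntervalIntegrable f' volume a b)
    (hf : ∀ x ∈ Icc a b, f x = f a + ∫ t in a..x, f' t) (hlip : LipschitzOnWith K f (Icc a b)) :
    eLpNorm f' ⊤ (volume.restrict (Icc a b)) ≤ K := by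
  rw [eLpNorm_exponent_top]
  refine eLpNormEssSup_le_of_ae_nnnorm_bound ?_
  rw [← Measure.restrict_congr_set Ioo_ae_eq_Icc, ae_restrict_iff' measurableSet_Ioo]
  filter_upwards [hf'.ae_hasDerivAt_integral] with x hderiv hx
  have hab : a ≤ b := (hx.1.trans hx.2).le
  have hxI : x ∈ Icc a b := Ioo_subset_Icc_self hx
  rw [uIcc_of_le hab] at hderiv
  have hfx : HasDerivAt f (f' x) x := by
    refine ((hderiv hxI a (left_mem_Icc.2 hab)).const_add (f a)).congr_of_eventuallyEq ?_
    filter_upwards [Icc_mem_nhds hx.1 hx.2] with y hy using hf y hy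
  exact_mod_cast hfx.le_of_lipschitzOn (Icc_mem_nhds hx.1 hx.2) hlip

end AbsolutelyContinuous

section ConvexChord

variable {f g : ℝ → ℝ} {a b : ℝ} {K : ℝ≥0}

theorem ConvexOn.abs_sub_le_of_le (hg : ConvexOn ℝ (Icc a b) g)
    (hf : LipschitzOnWith K f (Icc a b)) (hfg : ∀ x ∈ Icc a b, f x ≤ g x) (ha : f a = g a)
    (hb : f b = g b) {s u : ℝ} (hs : s ∈ Icc a b) (hu : u ∈ Icc a b) (hsu : s < u) :
    |g u - g s| ≤ K * (u - s) := by
  have haI : a ∈ Icc a b := left_mem_Icc.2 (hs.1.trans hs.2)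
  have hbI : b ∈ Icc a b := right_mem_Icc.2 (hs.1.trans hs.2)
  have hf_chord : ∀ x ∈ Icc a b, ∀ y ∈ Icc a b, x ≤ y → |f y - f x| ≤ K * (y - x) :=
    fun x hx y hy hxy => by
      simpa [Real.dist_eq, abs_of_nonneg (sub_nonneg.2 hxy)] using hf.dist_le_mul y hy x hx
  have hupper : slope g s u ≤ K := calc
    slope g s u ≤ slope g s b :=
      hg.slope_mono hs ⟨hu, hsu.ne'⟩ ⟨hbI, (hsu.trans_le hu.2).ne'⟩ hu.2
    _ ≤ K := by
      rw [slope_def_field, div_le_iff₀ (by linarith [hu.2])]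
      linarith [hfg s hs, le_abs_self (f b - f s), hf_chord s hs b hbI hs.2]
  have hlower : -K ≤ slope g s u := calc
    -(K : ℝ) ≤ slope g a u := by
      rw [slope_def_field, le_div_iff₀ (by linarith [hs.1])]
      linarith [hfg u hu, neg_abs_le (f u - f a), hf_chord a haI u hu hu.1]
    _ = slope g u a := slope_comm g a u
    _ ≤ slope g u s := hg.slope_mono hu ⟨haI, (hs.1.trans_lt hsu).ne⟩ ⟨hs, hsu.ne⟩ hs.1
    _ = slope g s u := slope_comm g u s
  rw [slope_def_field] at hupper hlower
  rw [← div_le_iff₀ (sub_pos.2 hsu), ← abs_of_pos (sub_pos.2 hsu), ← abs_div]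
  exact abs_le.2 ⟨hlower, hupper⟩

theorem ConvexOn.lipschitzOnWith_of_le (hg : ConvexOn ℝ (Icc a b) g)
    (hf : LipschitzOnWith K f (Icc a b)) (hfg : ∀ x ∈ Icc a b, f x ≤ g x) (ha : f a = g a)
    (hb : f b = g b) : LipschitzOnWith K g (Icc a b) := by
  refine LipschitzOnWith.of_dist_le_mul fun x hx y hy => ?_
  rw [Real.dist_eq, Real.dist_eq]
  rcases lt_trichotomy x y with hxy | rfl | hxy
  · rw [abs_sub_comm, abs_sub_comm x, abs_of_pos (sub_pos.2 hxy)]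
    exact hg.abs_sub_le_of_le hf hfg ha hb hx hy hxy
  · simp
  · rw [abs_of_pos (sub_pos.2 hxy)]
    exact hg.abs_sub_le_of_le hf hfg ha hb hy hx hxy

end ConvexChord

theorem stmt1_general (α β : ℝ) (f g f' g' : ℝ → ℝ)
    (hf'int : IntervalIntegrable f' volume α β)
    (hg'int : IntervalIntegrable g' volume α β)
    (hf : ∀ x ∈ Icc α β, f x = f α + ∫ t in α..x, f' t)
    (hg : ∀ x ∈ Icc α β, g x = g α + ∫ t in α..x, g' t)
    (hgconv : ConvexOn ℝ (Icc α β) g)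
    (ha : f α = g α) (hb : f β = g β)
    (hlt : ∀ x ∈ Ioo α β, f x < g x) :
    eLpNorm g' ⊤ (volume.restrict (Icc α β)) ≤ eLpNorm f' ⊤ (volume.restrict (Icc α β)) := by
  set μ := volume.restrict (Icc α β)
  by_cases hfin : eLpNorm f' ⊤ μ = ⊤
  · simp [hfin]
  set K := (eLpNorm f' ⊤ μ).toNNReal
  have hf'_bound : ∀ᵐ t ∂μ, ‖f' t‖ ≤ K := by
    filter_upwards [ae_le_eLpNormEssSup (f := f') (μ := μ)] with t ht
    rwa [← eLpNorm_exponent_top, ← ENNReal.coe_toNNReal hfin, ← ofReal_norm,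
      ENNReal.ofReal_le_iff_le_toReal ENNReal.coe_ne_top] at ht
  have hfg : ∀ x ∈ Icc α β, f x ≤ g x := by
    intro x hx
    rcases eq_endpoints_or_mem_Ioo_of_mem_Icc hx with rfl | rfl | hx
    · exact ha.le
    · exact hb.le
    · exact (hlt x hx).le
  have hg_lip : LipschitzOnWith K g (Icc α β) :=
    hgconv.lipschitzOnWith_of_le (lipschitzOnWith_of_eq_integral hf'int hf hf'_bound) hfg ha hb
  calc eLpNorm g' ⊤ μ ≤ K := eLpNorm_top_le_of_lipschitzOnWith_of_eq_integral hg'int hg hg_lip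
    _ = eLpNorm f' ⊤ μ := ENNReal.coe_toNNReal hfin

/-- Under the same hypotheses as Statement 0, the `L^∞` norms
(essential suprema on `[α, β]`) satisfy `‖g'‖_∞ ≤ ‖f'‖_∞`. -/
theorem stmt1 (α β : ℝ) (hαβ : α < β) (f g f' g' : ℝ → ℝ)
    (hf'int : IntervalIntegrable f' volume α β)
    (hg'int : IntervalIntegrable g' volume α β)
    (hf : ∀ x ∈ Icc α β, f x = f α + ∫ t in α..x, f' t)
    (hg : ∀ x ∈ Icc α β, g x = g α + ∫ t in α..x, g' t)
    (hgconv : ConvexOn ℝ (Icc α β) g)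
    (ha : f α = g α) (hb : f β = g β)
    (hlt : ∀ x ∈ Ioo α β, f x < g x) :
    eLpNorm g' ⊤ (volume.restrict (Icc α β)) ≤ eLpNorm f' ⊤ (volume.restrict (Icc α β)) :=
  stmt1_general α β f g f' g' hf'int hg'int hf hg hgconv ha hb hlt
end

section
/- Let $[\alpha,\beta]$ be a compact interval and let $f,g:[\alpha,\beta]\to\mathbb{R}$ be continuous functions with $g$ convex, $f(\alpha)=g(\alpha)$, $f(\beta)=g(\beta)$, and $f(x)\le g(x)$ for all $x\in[\alpha,\beta]$. Then the total variation of $g$ on $[\alpha,\beta]$ is at most the total variation of $f$ on $[\alpha,\beta]$. -/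
open MeasureTheory Set

lemma eVariationOn_neg' (g : ℝ → ℝ) (s : Set ℝ) :
    eVariationOn (fun x => -g x) s = eVariationOn g s := by
  simp [eVariationOn, edist_neg_neg]

lemma AntitoneOn.eVariationOn_le' {g : ℝ → ℝ} {s : Set ℝ} (hg : AntitoneOn g s) {a b : ℝ}
    (as : a ∈ s) (bs : b ∈ s) : eVariationOn g (s ∩ Icc a b) ≤ ENNReal.ofReal (g a - g b) := by
  have h : MonotoneOn (fun x => -g x) s := fun x hx y hy hxy => neg_le_neg (hg hx hy hxy)
  have := h.eVariationOn_le as bs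
  rwa [eVariationOn_neg', neg_sub_neg] at this

/-- If `f, g : [α, β] → ℝ` are continuous, `g` is convex,
`f = g` at the endpoints and `f ≤ g` on `[α, β]`, then the total variation of `g`
on `[α, β]` is at most that of `f`. -/
theorem stmt2 (α β : ℝ) (hαβ : α < β) (f g : ℝ → ℝ)
    (hfc : ContinuousOn f (Icc α β)) (hgc : ContinuousOn g (Icc α β))
    (hgconv : ConvexOn ℝ (Icc α β) g)
    (ha : f α = g α) (hb : f β = g β)
    (hle : ∀ x ∈ Icc α β, f x ≤ g x) :
    eVariationOn g (Icc α β) ≤ eVariationOn f (Icc α β) := by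
  obtain ⟨m, hm, hmin⟩ := isCompact_Icc.exists_isMinOn (nonempty_Icc.2 hαβ.le) hgc
  have hαm : α ≤ m := hm.1
  have hmβ : m ≤ β := hm.2
  have hαmem : α ∈ Icc α β := ⟨le_rfl, hαβ.le⟩
  have hβmem : β ∈ Icc α β := ⟨hαβ.le, le_rfl⟩
  -- antitone on [α, m]
  have hanti : AntitoneOn g (Icc α m) := by
    intro x hx y hy hxy
    have hxs : x ∈ Icc α β := ⟨hx.1, hx.2.trans hmβ⟩
    have hys : y ∈ Icc α β := ⟨hy.1, hy.2.trans hmβ⟩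
    have hyseg : y ∈ segment ℝ x m := by
      rw [segment_eq_Icc (hxy.trans hy.2)]; exact ⟨hxy, hy.2⟩
    have := hgconv.le_on_segment hxs hm hyseg
    exact this.trans (max_le le_rfl (hmin hxs))
  -- monotone on [m, β]
  have hmono : MonotoneOn g (Icc m β) := by
    intro x hx y hy hxy
    have hxs : x ∈ Icc α β := ⟨hαm.trans hx.1, hx.2⟩
    have hys : y ∈ Icc α β := ⟨hαm.trans hy.1, hy.2⟩
    have hxseg : x ∈ segment ℝ m y := by
      rw [segment_eq_Icc (hx.1.trans hxy)]; exact ⟨hx.1, hxy⟩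
    have := hgconv.le_on_segment hm hys hxseg
    exact this.trans (max_le (hmin hys) le_rfl)
  -- split both variations at m
  have hsplitg := eVariationOn.Icc_add_Icc g hαm hmβ hm
  have hsplitf := eVariationOn.Icc_add_Icc f hαm hmβ hm
  have hIl : Icc α β ∩ Icc α m = Icc α m := inter_eq_right.2 (Icc_subset_Icc le_rfl hmβ)
  have hIr : Icc α β ∩ Icc m β = Icc m β := inter_eq_right.2 (Icc_subset_Icc hαm le_rfl)
  have hIc : Icc α β ∩ Icc α β = Icc α β := inter_self _
  rw [hIl, hIr, hIc] at hsplitg hsplitf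
  rw [← hsplitg, ← hsplitf]
  -- bound each piece
  have hg1 : eVariationOn g (Icc α m) ≤ ENNReal.ofReal (g α - g m) := by
    have := hanti.eVariationOn_le' (a := α) (b := m) ⟨le_rfl, hαm⟩ ⟨hαm, le_rfl⟩
    rwa [inter_self] at this
  have hg2 : eVariationOn g (Icc m β) ≤ ENNReal.ofReal (g β - g m) := by
    have := hmono.eVariationOn_le (a := m) (b := β) ⟨le_rfl, hmβ⟩ ⟨hmβ, le_rfl⟩
    rwa [inter_self] at this
  have hfm : f m ≤ g m := hle m hm
  have hf1 : ENNReal.ofReal (g α - g m) ≤ eVariationOn f (Icc α m) := by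
    refine le_trans ?_ (eVariationOn.edist_le f (x := m) (y := α) ⟨hαm, le_rfl⟩ ⟨le_rfl, hαm⟩)
    rw [edist_dist, Real.dist_eq]
    refine ENNReal.ofReal_le_ofReal ?_
    calc g α - g m ≤ f α - f m := by rw [ha]; linarith
      _ ≤ |f m - f α| := by rw [abs_sub_comm]; exact le_abs_self _
  have hf2 : ENNReal.ofReal (g β - g m) ≤ eVariationOn f (Icc m β) := by
    refine le_trans ?_ (eVariationOn.edist_le f (x := β) (y := m) ⟨hmβ, le_rfl⟩ ⟨le_rfl, hmβ⟩)
    rw [edist_dist, Real.dist_eq]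
    refine ENNReal.ofReal_le_ofReal ?_
    calc g β - g m ≤ f β - f m := by rw [hb]; linarith
      _ ≤ |f β - f m| := le_abs_self _
  exact add_le_add (hg1.trans hf1) (hg2.trans hf2)
end

section
/- For every $\beta>0$ one has the subordination identity $e^{-\beta}=\frac{1}{2\pi}\int_0^\infty e^{-\pi\sigma\beta^2}\,e^{-\frac{1}{4\pi\sigma}}\,\sigma^{-3/2}\,d\sigma$. -/
/-!
Substituting `σ = s⁻²` turns the integral into `2 ∫₀^∞ exp (-(q s)² - (p / s)²) ds` with
`p = √π β` and `q = 1 / (2 √π)`, and `(q s)² + (p / s)² = (q s - p / s)² + β`.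
The Cauchy–Schlömilch substitution `u = q s - p / s` maps `(0, ∞)` onto `ℝ` with
`du = (q + p / s²) ds`, while the inversion `s ↦ p / (q s)` only changes the sign of `q s - p / s`
and exchanges `q ds` with `p / s² ds`. Hence both halves of `du` contribute equally and
`∫₀^∞ exp (-(q s - p / s)²) ds = √π / (2 q)`.
-/

open MeasureTheory Real Set

section Substitution

variable {E : Type*} [NormedAddCommGroup E] [NormedSpace ℝ E]

theorem image_const_div_Ioi_zero {c : ℝ} (hc : 0 < c) : (c / ·) '' Ioi 0 = Ioi (0 : ℝ) := by
  refine (Set.image_subset_iff.2 fun x hx => div_pos hc hx).antisymm fun y hy => ?_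
  exact ⟨c / y, div_pos hc hy, div_div_cancel₀ hc.ne'⟩

theorem integral_comp_const_div_Ioi (g : ℝ → E) {c : ℝ} (hc : 0 < c) :
    ∫ x in Ioi 0, (c / x ^ 2) • g (c / x) = ∫ x in Ioi 0, g x := by
  have hderiv : ∀ x ∈ Ioi (0 : ℝ), HasDerivWithinAt (c / ·) (-(c / x ^ 2)) (Ioi 0) x :=
    fun x hx => by
      simpa [div_eq_mul_inv] using ((hasDerivAt_inv (ne_of_gt hx)).const_mul c).hasDerivWithinAt
  have hinj : InjOn (c / ·) (Ioi (0 : ℝ)) := fun x _ y _ hxy =>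
    inv_injective (mul_left_cancel₀ hc.ne' (by simpa [div_eq_mul_inv] using hxy))
  have := integral_image_eq_integral_abs_deriv_smul measurableSet_Ioi hderiv hinj g
  rw [image_const_div_Ioi_zero hc] at this
  rw [this]
  refine setIntegral_congr_fun measurableSet_Ioi fun x hx => ?_
  have hx : (0 : ℝ) < x := hx
  simp only [abs_neg, abs_of_pos (div_pos hc (pow_pos hx 2))]

theorem hasDerivAt_mul_sub_div (p q : ℝ) {s : ℝ} (hs : s ≠ 0) :
    HasDerivAt (fun s => q * s - p / s) (q + p / s ^ 2) s := by
  have hlin : HasDerivAt (fun s => q * s) q s := by simpa using (hasDerivAt_id s).const_mul q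
  have hinv : HasDerivAt (fun s => p / s) (-(p / s ^ 2)) s := by
    simpa [div_eq_mul_inv] using (hasDerivAt_inv hs).const_mul p
  simpa only [sub_neg_eq_add] using hlin.fun_sub hinv

theorem strictMonoOn_mul_sub_div {p q : ℝ} (hp : 0 < p) (hq : 0 < q) :
    StrictMonoOn (fun s => q * s - p / s) (Ioi 0) := fun x hx y _ hxy => by
  have : p / y < p / x := div_lt_div_of_pos_left hp hx hxy
  have : q * x < q * y := mul_lt_mul_of_pos_left hxy hq
  dsimp only
  linarith

theorem image_mul_sub_div_Ioi_zero {p q : ℝ} (hp : 0 < p) (hq : 0 < q) :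
    (fun s => q * s - p / s) '' Ioi 0 = univ := by
  refine eq_univ_of_forall fun y => ?_
  -- the positive root of `q s² - y s - p = 0`
  set r := √(y ^ 2 + 4 * p * q)
  have hr : r ^ 2 = y ^ 2 + 4 * p * q := sq_sqrt (by positivity)
  have hry : -y < r := by nlinarith [sqrt_nonneg (y ^ 2 + 4 * p * q), mul_pos hp hq]
  have hyr : 0 < y + r := by linarith
  refine ⟨(y + r) / (2 * q), div_pos hyr (by positivity), ?_⟩
  field_simp
  linear_combination hr

theorem integral_comp_mul_sub_div_Ioi (g : ℝ → E) {p q : ℝ} (hp : 0 < p) (hq : 0 < q) :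
    ∫ s in Ioi 0, (q + p / s ^ 2) • g (q * s - p / s) = ∫ x, g x := by
  have := integral_image_eq_integral_abs_deriv_smul measurableSet_Ioi
    (fun s hs => (hasDerivAt_mul_sub_div p q (ne_of_gt hs)).hasDerivWithinAt)
    (strictMonoOn_mul_sub_div hp hq).injOn g
  rw [image_mul_sub_div_Ioi_zero hp hq, setIntegral_univ] at this
  rw [this]
  refine setIntegral_congr_fun measurableSet_Ioi fun s _ => ?_
  rw [abs_of_pos (by positivity)]

theorem integrableOn_comp_mul_sub_div_Ioi_iff (g : ℝ → E) {p q : ℝ} (hp : 0 < p) (hq : 0 < q) :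
    IntegrableOn (fun s => (q + p / s ^ 2) • g (q * s - p / s)) (Ioi 0) ↔ Integrable g := by
  have := integrableOn_image_iff_integrableOn_abs_deriv_smul measurableSet_Ioi
    (fun s hs => (hasDerivAt_mul_sub_div p q (ne_of_gt hs)).hasDerivWithinAt)
    (strictMonoOn_mul_sub_div hp hq).injOn g
  rw [image_mul_sub_div_Ioi_zero hp hq, integrableOn_univ] at this
  rw [this]
  refine integrableOn_congr_fun (fun s _ => ?_) measurableSet_Ioi
  rw [abs_of_pos (by positivity)]

end Substitution

theorem integral_exp_neg_sq_mul_sub_div_Ioi {p q : ℝ} (hp : 0 < p) (hq : 0 < q) :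
    ∫ s in Ioi 0, exp (-(q * s - p / s) ^ 2) = √π / (2 * q) := by
  set F : ℝ → ℝ := fun s => exp (-(q * s - p / s) ^ 2)
  have hgauss : Integrable fun x : ℝ => exp (-x ^ 2) := by
    simpa using integrable_exp_neg_mul_sq one_pos
  have hsum : IntegrableOn (fun s => (q + p / s ^ 2) * F s) (Ioi 0) :=
    (integrableOn_comp_mul_sub_div_Ioi_iff _ hp hq).2 hgauss
  have hsymm : ∫ s in Ioi 0, p / s ^ 2 * F s = q * ∫ s in Ioi 0, F s := by
    rw [← integral_comp_const_div_Ioi F (div_pos hp hq), ← integral_const_mul]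
    refine setIntegral_congr_fun measurableSet_Ioi fun s hs => ?_
    have hs : s ≠ 0 := ne_of_gt hs
    have hFinv : F (p / q / s) = F s := by
      simp only [F]
      rw [show q * (p / q / s) - p / (p / q / s) = -(q * s - p / s) by field_simp; ring, neg_sq]
    rw [smul_eq_mul, hFinv]
    field_simp
  have hF : IntegrableOn F (Ioi 0) := by
    refine (hsum.const_mul q⁻¹).mono' (by fun_prop : Measurable F).aestronglyMeasurable ?_
    refine ae_restrict_of_forall_mem measurableSet_Ioi fun s _ => ?_
    rw [norm_of_nonneg (exp_pos _).le, ← mul_assoc, inv_mul_eq_div, add_div, div_self hq.ne']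
    exact le_mul_of_one_le_left (exp_pos _).le (le_add_of_nonneg_right (by positivity))
  have hpF : IntegrableOn (fun s => p / s ^ 2 * F s) (Ioi 0) :=
    (hsum.sub (hF.const_mul q)).congr_fun (fun s _ => by simp only [Pi.sub_apply]; ring)
      measurableSet_Ioi
  have hcov := integral_comp_mul_sub_div_Ioi (fun x => exp (-x ^ 2)) hp hq
  simp only [smul_eq_mul, add_mul] at hcov
  rw [integral_add (hF.const_mul q) hpF, integral_const_mul, hsymm,
    show ∫ x : ℝ, exp (-x ^ 2) = √π by simpa using integral_gaussian 1] at hcov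
  field_simp
  linarith

theorem integral_exp_neg_sq_mul_sub_sq_div_Ioi {p q : ℝ} (hp : 0 < p) (hq : 0 < q) :
    ∫ s in Ioi 0, exp (-(q * s) ^ 2 - (p / s) ^ 2) = √π / (2 * q) * exp (-(2 * p * q)) := by
  rw [← integral_exp_neg_sq_mul_sub_div_Ioi hp hq, ← integral_mul_const]
  refine setIntegral_congr_fun measurableSet_Ioi fun s hs => ?_
  have hs : s ≠ 0 := ne_of_gt hs
  rw [← exp_add]
  congr 1
  field_simp
  ring

theorem integral_exp_neg_mul_exp_neg_div_mul_rpow_neg_three_halves_Ioi {p q : ℝ}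
    (hp : 0 < p) (hq : 0 < q) :
    ∫ t in Ioi 0, exp (-(p ^ 2 * t)) * exp (-(q ^ 2 / t)) * t ^ (-(3 : ℝ) / 2) =
      √π / q * exp (-(2 * p * q)) := by
  rw [← integral_comp_rpow_Ioi (fun t => exp (-(p ^ 2 * t)) * exp (-(q ^ 2 / t)) *
    t ^ (-(3 : ℝ) / 2)) (show (-2 : ℝ) ≠ 0 by norm_num),
    show √π / q * exp (-(2 * p * q)) = 2 * (√π / (2 * q) * exp (-(2 * p * q))) by field_simp,
    ← integral_exp_neg_sq_mul_sub_sq_div_Ioi hp hq, ← integral_const_mul]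
  refine setIntegral_congr_fun measurableSet_Ioi fun s hs => ?_
  have hs : (0 : ℝ) < s := hs
  rw [← rpow_mul hs.le]
  norm_num
  rw [← exp_add]
  field_simp
  ring_nf

/-- The subordination identity
`e^{-β} = (1/(2π)) ∫_0^∞ e^{-πσβ²} e^{-1/(4πσ)} σ^{-3/2} dσ` for `β > 0`. -/
theorem stmt3 (β : ℝ) (hβ : 0 < β) :
    Real.exp (-β) =
      (1 / (2 * π)) *
        ∫ σ in Ioi (0 : ℝ),
          Real.exp (-(π * σ * β ^ 2)) * Real.exp (-(1 / (4 * π * σ))) * σ ^ (-(3 : ℝ) / 2) := by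
  have hπ : 0 < √π := sqrt_pos.2 pi_pos
  have hsq : √π ^ 2 = π := sq_sqrt pi_pos.le
  have hp_sq (σ : ℝ) : (√π * β) ^ 2 * σ = π * σ * β ^ 2 := by rw [mul_pow, hsq]; ring
  have hq_sq (σ : ℝ) : (2 * √π)⁻¹ ^ 2 / σ = 1 / (4 * π * σ) := by
    rw [inv_pow, mul_pow, hsq]; ring
  have key := integral_exp_neg_mul_exp_neg_div_mul_rpow_neg_three_halves_Ioi (mul_pos hπ hβ)
    (inv_pos.2 (mul_pos two_pos hπ))
  simp only [hp_sq, hq_sq] at key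
  rw [key, show 2 * (√π * β) * (2 * √π)⁻¹ = β by field_simp]
  field_simp
  rw [hsq]
end

section
/- Let $a,b>0$ and $t>0$, and for $\xi\in\mathbb{R}^d$ define $\widehat{\varphi}_{a,b}(\xi,t)=\exp\big(-t\,\frac{-b+\sqrt{b^2+16a\pi^2|\xi|^2}}{2a}\big)$. Then the function $g:[0,\infty)\to\mathbb{R}$ defined by $g(s)=\exp\big(-t\,\frac{-b+\sqrt{b^2+16a\pi^2 s}}{2a}\big)$ (so that $\widehat{\varphi}_{a,b}(\xi,t)=g(|\xi|^2)$) is completely monotone on $(0,\infty)$, i.e. $(-1)^n g^{(n)}(s)\ge 0$ for all $s>0$ and all integers $n\ge 0$. -/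
open Real Set Polynomial

lemma evalNonneg {P : Polynomial ℝ} (h : ∀ i, 0 ≤ P.coeff i) {x : ℝ} (hx : 0 ≤ x) :
    0 ≤ P.eval x := by
  rw [Polynomial.eval_eq_sum_range]
  exact Finset.sum_nonneg fun i _ => mul_nonneg (h i) (pow_nonneg hx i)

lemma mulCoeffNonneg {P Q : Polynomial ℝ} (hP : ∀ i, 0 ≤ P.coeff i)
    (hQ : ∀ i, 0 ≤ Q.coeff i) : ∀ i, 0 ≤ (P * Q).coeff i := by
  intro i
  rw [Polynomial.coeff_mul]
  exact Finset.sum_nonneg fun p _ => mul_nonneg (hP p.1) (hQ p.2)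

lemma CCoeffNonneg {r : ℝ} (hr : 0 ≤ r) : ∀ i, 0 ≤ (Polynomial.C r).coeff i := by
  intro i
  rw [Polynomial.coeff_C]
  split <;> simp [hr]

lemma XCoeffNonneg : ∀ i, 0 ≤ (Polynomial.X : Polynomial ℝ).coeff i := by
  intro i
  rw [Polynomial.coeff_X]
  split <;> simp

lemma XpowCoeffNonneg (k : ℕ) : ∀ i, 0 ≤ ((Polynomial.X : Polynomial ℝ) ^ k).coeff i := by
  intro i
  rw [Polynomial.coeff_X_pow]
  split <;> simp

lemma derivCoeffNonneg {P : Polynomial ℝ} (hP : ∀ i, 0 ≤ P.coeff i) :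
    ∀ i, 0 ≤ P.derivative.coeff i := by
  intro i
  rw [Polynomial.coeff_derivative]
  exact mul_nonneg (hP _) (by positivity)

/-- For `a, b, t > 0`, the function
`g(s) = exp(-t(-b + √(b² + 16aπ²s))/(2a))`, which satisfies
`φ̂_{a,b}(ξ,t) = g(|ξ|²)`, is completely monotone on `(0, ∞)`: it is infinitely
differentiable there and `(-1)ⁿ g⁽ⁿ⁾(s) ≥ 0` for all `n ≥ 0` and `s > 0`. -/
theorem stmt4 (d : ℕ) (a b t : ℝ) (ha : 0 < a) (hb : 0 < b) (ht : 0 < t)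
    (g : ℝ → ℝ)
    (hg : ∀ s : ℝ, g s = Real.exp (-t * ((-b + Real.sqrt (b ^ 2 + 16 * a * π ^ 2 * s)) / (2 * a))))
    (hrel : ∀ ξ : EuclideanSpace ℝ (Fin d),
      Real.exp (-t * ((-b + Real.sqrt (b ^ 2 + 16 * a * π ^ 2 * ‖ξ‖ ^ 2)) / (2 * a)))
        = g (‖ξ‖ ^ 2)) :
    ContDiffOn ℝ (⊤ : ℕ∞) g (Ioi 0) ∧
      ∀ (n : ℕ) (s : ℝ), 0 < s → 0 ≤ (-1 : ℝ) ^ n * iteratedDeriv n g s := by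
  set K : ℝ := 16 * a * π ^ 2 with hKdef
  set c : ℝ := t / (2 * a) with hcdef
  have hK : 0 < K := by positivity
  have hc : 0 < c := by positivity
  set u : ℝ → ℝ := fun s => Real.sqrt (b ^ 2 + K * s) with hudef
  have harg : ∀ s : ℝ, 0 < s → 0 < b ^ 2 + K * s := fun s hs => by positivity
  have hupos : ∀ s : ℝ, 0 < s → 0 < u s := fun s hs => Real.sqrt_pos.mpr (harg s hs)
  have hg' : ∀ s, g s = Real.exp (c * b - c * u s) := by
    intro s
    rw [hg s]
    congr 1
    rw [hcdef]
    field_simp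
    all_goals ring
  have hgpos : ∀ s, 0 < g s := fun s => (hg' s) ▸ Real.exp_pos _
  -- derivative of u
  have hud : ∀ s : ℝ, 0 < s → HasDerivAt u (K / 2 * (u s)⁻¹) s := by
    intro s hs
    have hinner : HasDerivAt (fun s : ℝ => b ^ 2 + K * s) K s := by
      simpa using ((hasDerivAt_id s).const_mul K).const_add (b ^ 2)
    have := (Real.hasDerivAt_sqrt (ne_of_gt (harg s hs))).comp s hinner
    convert this using 1
    · rfl
    · rfl
    · rfl
    rw [hudef]
    rw [one_div, div_eq_mul_inv]
    ring
  -- derivative of g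
  have hgd : ∀ s : ℝ, 0 < s → HasDerivAt g (-(c * (K / 2) * (u s)⁻¹) * g s) s := by
    intro s hs
    have hin : HasDerivAt (fun s => c * b - c * u s) (0 - c * (K / 2 * (u s)⁻¹)) s :=
      (hasDerivAt_const s (c * b)).sub (HasDerivAt.const_mul c (hud s hs))
    have := (Real.hasDerivAt_exp (c * b - c * u s)).comp s hin
    have heq : g = fun s => Real.exp (c * b - c * u s) := funext hg'
    rw [heq]
    convert this using 1
    · rfl
    · rfl
    · rfl
    rw [← hg' s, ← heq]
    ring
  -- derivative of 1/u
  have hvd : ∀ s : ℝ, 0 < s → HasDerivAt (fun s => (u s)⁻¹) (-(K / 2) * ((u s)⁻¹) ^ 3) s := by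
    intro s hs
    have := (hud s hs).inv (ne_of_gt (hupos s hs))
    convert this using 1
    · rfl
    · rfl
    · rfl
    have h0 : u s ≠ 0 := (hupos s hs).ne'
    field_simp
  -- smoothness
  have hcd : ContDiffOn ℝ (⊤ : ℕ∞) g (Ioi 0) := by
    have heq : g = fun s => Real.exp (c * b - c * u s) := funext hg'
    rw [heq]
    intro s hs
    apply ContDiffAt.contDiffWithinAt
    apply ContDiffAt.exp
    refine ContDiffAt.sub contDiffAt_const (ContDiffAt.mul contDiffAt_const ?_)
    exact (Real.contDiffAt_sqrt (ne_of_gt (harg s hs))).comp s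
      ((contDiff_const.add (contDiff_const.mul contDiff_id)).contDiffAt)
  -- main induction
  have main : ∀ n : ℕ, ∃ P : Polynomial ℝ, (∀ i, 0 ≤ P.coeff i) ∧
      ∀ s : ℝ, 0 < s → iteratedDeriv n g s = (-1) ^ n * (g s * P.eval ((u s)⁻¹)) := by
    intro n
    induction n with
    | zero =>
      exact ⟨1, fun i => by simp [Polynomial.coeff_one]; split <;> simp,
        fun s hs => by simp [iteratedDeriv_zero]⟩
    | succ n ih =>
      obtain ⟨P, hPc, hPs⟩ := ih
      refine ⟨Polynomial.C (c * (K / 2)) * Polynomial.X * P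
          + Polynomial.C (K / 2) * Polynomial.X ^ 3 * P.derivative, ?_, ?_⟩
      · intro i
        rw [Polynomial.coeff_add]
        apply add_nonneg
        · exact mulCoeffNonneg (mulCoeffNonneg (CCoeffNonneg (by positivity)) XCoeffNonneg) hPc i
        · exact mulCoeffNonneg (mulCoeffNonneg (CCoeffNonneg (by positivity)) (XpowCoeffNonneg 3))
            (derivCoeffNonneg hPc) i
      · intro s hs
        rw [iteratedDeriv_succ]
        have hev : iteratedDeriv n g =ᶠ[nhds s]
            fun s => (-1) ^ n * (g s * P.eval ((u s)⁻¹)) := by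
          filter_upwards [isOpen_Ioi.mem_nhds hs] with x hx
          exact hPs x hx
        rw [hev.deriv_eq]
        have hPd : HasDerivAt (fun s => P.eval ((u s)⁻¹))
            (P.derivative.eval ((u s)⁻¹) * (-(K / 2) * ((u s)⁻¹) ^ 3)) s :=
          by have := (P.hasDerivAt ((u s)⁻¹)).comp s (hvd s hs); exact this
        have hFd := HasDerivAt.const_mul ((-1 : ℝ) ^ n) ((hgd s hs).mul hPd)
        erw [hFd.deriv]
        simp only [Polynomial.eval_add, Polynomial.eval_mul, Polynomial.eval_C,
          Polynomial.eval_X, Polynomial.eval_pow]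
        ring
  refine ⟨hcd, fun n s hs => ?_⟩
  obtain ⟨P, hPc, hPs⟩ := main n
  rw [hPs s hs, ← mul_assoc, ← pow_add]
  rw [Even.neg_one_pow ⟨n, rfl⟩, one_mul]
  exact mul_nonneg (hgpos s).le (evalNonneg hPc (inv_nonneg.mpr (hupos s hs).le))
end

section
/- Let $a,b>0$ and $t>0$. Then $\exp\big(-t\,\frac{-b+\sqrt{b^2+16a\pi^2|\xi|^2}}{2a}\big)=\int_0^\infty e^{-\pi\lambda|\xi|^2}\,e^{\frac{tb}{2a}}\,\frac{t}{\sqrt{a}}\,e^{-\frac{\lambda b^2}{16\pi a}}\,e^{-\frac{\pi t^2}{a\lambda}}\,\lambda^{-3/2}\,d\lambda$ for every $\xi\in\mathbb{R}^d$. -/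
/-!
Up to the constant `exp (t b / 2a) · t / √a`, the integrand is `l ^ (-3/2) exp (-B / l - A l)`
with `A = π |ξ|² + b² / (16 π a)` and `B = π t² / a`. The substitution `l = B / x²` turns its
integral into `(2 / √B) ∫₀^∞ exp (-x² - c² / x²) dx` with `c = √(AB) = t √(b² + 16 a π² |ξ|²) / 4a`.
That integral is `(√π / 2) exp (-2c)` by the Cauchy–Schlömilch substitution: `x ↦ x - c / x` maps
`(0, ∞)` onto `ℝ` with Jacobian `1 + c / x²`, and the inversion `x ↦ c / x` shows that the part
`c / x²` of the Jacobian contributes as much as the part `1` when the integrand is an even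
function of `x - c / x`.
-/

open MeasureTheory Real Set

section ChangeOfVariables

variable {E : Type*} [NormedAddCommGroup E] [NormedSpace ℝ E] {c : ℝ}

lemma hasDerivAt_sub_div (c : ℝ) {x : ℝ} (hx : x ≠ 0) :
    HasDerivAt (fun x => x - c / x) (1 + c / x ^ 2) x :=
  ((hasDerivAt_id x).sub ((hasDerivAt_inv hx).const_mul c)).congr_deriv (by ring)

lemma strictMonoOn_sub_div (hc : 0 ≤ c) : StrictMonoOn (fun x => x - c / x) (Ioi 0) :=
  fun x hx y _ hxy => by
    have : c / y ≤ c / x := div_le_div_of_nonneg_left hc hx hxy.le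
    simp only
    linarith

lemma image_sub_div_Ioi (hc : 0 < c) : (fun x => x - c / x) '' Ioi 0 = univ := by
  refine eq_univ_of_forall fun y => ?_
  -- the positive root of `x ^ 2 - y * x - c`
  set s := √(y ^ 2 + 4 * c)
  have hs : s ^ 2 = y ^ 2 + 4 * c := sq_sqrt (by positivity)
  have hys : |y| < s := by
    rw [← sqrt_sq_eq_abs]
    exact sqrt_lt_sqrt (sq_nonneg y) (by linarith)
  have hx : 0 < (y + s) / 2 := by linarith [neg_abs_le y]
  refine ⟨(y + s) / 2, hx, ?_⟩
  rw [sub_eq_iff_eq_add', ← sub_eq_iff_eq_add, eq_div_iff hx.ne']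
  linear_combination (1 / 4) * hs

lemma integrableOn_comp_sub_div_Ioi_iff (hc : 0 < c) (g : ℝ → E) :
    IntegrableOn (fun x => (1 + c / x ^ 2) • g (x - c / x)) (Ioi 0) ↔ Integrable g := by
  rw [← integrableOn_univ, ← image_sub_div_Ioi hc,
    integrableOn_image_iff_integrableOn_abs_deriv_smul measurableSet_Ioi
      (fun x hx => (hasDerivAt_sub_div c (ne_of_gt hx)).hasDerivWithinAt)
      (strictMonoOn_sub_div hc.le).injOn]
  refine integrableOn_congr_fun (fun x _ => ?_) measurableSet_Ioi
  rw [abs_of_pos (by positivity)]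

lemma integral_comp_sub_div_Ioi (hc : 0 < c) (g : ℝ → E) :
    ∫ x in Ioi 0, (1 + c / x ^ 2) • g (x - c / x) = ∫ y, g y := by
  conv_rhs => rw [← setIntegral_univ, ← image_sub_div_Ioi hc]
  rw [integral_image_eq_integral_abs_deriv_smul measurableSet_Ioi
      (fun x hx => (hasDerivAt_sub_div c (ne_of_gt hx)).hasDerivWithinAt)
      (strictMonoOn_sub_div hc.le).injOn]
  refine setIntegral_congr_fun measurableSet_Ioi (fun x _ => ?_)
  rw [abs_of_pos (by positivity)]

lemma integral_comp_div_Ioi (hc : 0 < c) (g : ℝ → E) :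
    ∫ x in Ioi 0, (c / x ^ 2) • g (c / x) = ∫ y in Ioi 0, g y := by
  have himage : (fun x => c / x) '' Ioi 0 = Ioi 0 := by
    refine Subset.antisymm (image_subset_iff.2 fun x hx => div_pos hc hx) fun y hy => ?_
    exact ⟨c / y, div_pos hc hy, div_div_cancel₀ hc.ne'⟩
  have hderiv (x : ℝ) (hx : x ≠ 0) : HasDerivAt (fun x => c / x) (-(c / x ^ 2)) x :=
    ((hasDerivAt_inv hx).const_mul c).congr_deriv (by ring)
  conv_rhs => rw [← himage]
  rw [integral_image_eq_integral_abs_deriv_smul measurableSet_Ioi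
    (fun x hx => (hderiv x (ne_of_gt hx)).hasDerivWithinAt)
    (fun x _ y _ h => inv_inj.1 ((mul_right_inj' hc.ne').1 h))]
  refine setIntegral_congr_fun measurableSet_Ioi (fun x hx => ?_)
  rw [abs_neg, abs_of_pos (div_pos hc (pow_pos hx 2))]

lemma integral_comp_div_sq_Ioi {B : ℝ} (hB : 0 < B) (g : ℝ → E) :
    ∫ x in Ioi 0, (2 * B / x ^ 3) • g (B / x ^ 2) = ∫ y in Ioi 0, g y := by
  have himage : (fun x => B / x ^ 2) '' Ioi 0 = Ioi 0 := by
    refine Subset.antisymm (image_subset_iff.2 fun x hx => div_pos hB (pow_pos hx 2))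
      fun y hy => ⟨√(B / y), sqrt_pos.2 (div_pos hB hy), ?_⟩
    simp only
    rw [sq_sqrt (div_pos hB hy).le, div_div_cancel₀ hB.ne']
  have hderiv (x : ℝ) (hx : x ≠ 0) : HasDerivAt (fun x => B / x ^ 2) (-(2 * B / x ^ 3)) x :=
    (((hasDerivAt_pow 2 x).inv (pow_ne_zero 2 hx)).const_mul B).congr_deriv (by field_simp; ring)
  have hinj : InjOn (fun x => B / x ^ 2) (Ioi 0) := fun x hx y hy h =>
    (pow_left_inj₀ (le_of_lt hx) (le_of_lt hy) two_ne_zero).1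
      (inv_inj.1 ((mul_right_inj' hB.ne').1 h))
  conv_rhs => rw [← himage]
  rw [integral_image_eq_integral_abs_deriv_smul measurableSet_Ioi
    (fun x hx => (hderiv x (ne_of_gt hx)).hasDerivWithinAt) hinj]
  refine setIntegral_congr_fun measurableSet_Ioi (fun x hx => ?_)
  rw [abs_neg, abs_of_pos (div_pos (by positivity) (pow_pos hx 3))]

theorem integral_comp_sub_div_Ioi_of_even {g : ℝ → E} (heven : g.Even)
    (hg : Integrable g) (hc : 0 < c) :
    ∫ x in Ioi 0, g (x - c / x) = (2 : ℝ)⁻¹ • ∫ y, g y := by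
  have hweighted := (integrableOn_comp_sub_div_Ioi_iff hc g).2 hg
  have hint : IntegrableOn (fun x => g (x - c / x)) (Ioi 0) := by
    refine IntegrableOn.congr_fun (hweighted.bdd_smul 1 (φ := fun x => (1 + c / x ^ 2)⁻¹) ?_ ?_)
      (fun x _ => ?_) measurableSet_Ioi
    · exact (by fun_prop : Measurable fun x : ℝ => (1 + c / x ^ 2)⁻¹).aestronglyMeasurable
    · refine ae_of_all _ fun x => ?_
      rw [norm_inv, Real.norm_of_nonneg (by positivity)]
      exact inv_le_one_of_one_le₀ (by simp only [le_add_iff_nonneg_right]; positivity)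
    · simp only [Pi.smul_apply', smul_smul]
      rw [inv_mul_cancel₀ (by positivity), one_smul]
  have hinversion : ∫ x in Ioi 0, (c / x ^ 2) • g (x - c / x) = ∫ x in Ioi 0, g (x - c / x) := by
    rw [← integral_comp_div_Ioi hc (fun x => g (x - c / x))]
    refine setIntegral_congr_fun measurableSet_Ioi fun x _ => ?_
    simp only [div_div_cancel₀ hc.ne', ← heven (x - c / x), neg_sub]
  have hsplit : ∫ x in Ioi 0, (c / x ^ 2) • g (x - c / x)
      = (∫ y, g y) - ∫ x in Ioi 0, g (x - c / x) := by
    rw [← integral_comp_sub_div_Ioi hc, ← integral_sub hweighted hint]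
    simp only [add_smul, one_smul, add_sub_cancel_left]
  rw [hinversion] at hsplit
  rw [eq_inv_smul_iff₀ two_ne_zero, two_smul]
  exact eq_sub_iff_add_eq.1 hsplit

end ChangeOfVariables

lemma integral_exp_neg_sq_sub_sq_div_sq_Ioi {c : ℝ} (hc : 0 < c) :
    ∫ x in Ioi 0, exp (-x ^ 2 - c ^ 2 / x ^ 2) = √π / 2 * exp (-2 * c) := by
  have hgauss : ∫ x in Ioi 0, exp (-(x - c / x) ^ 2) = 2⁻¹ * √π := by
    refine (integral_comp_sub_div_Ioi_of_even (g := fun y => exp (-y ^ 2)) (fun y => by simp)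
      (by simpa using integrable_exp_neg_mul_sq one_pos) hc).trans ?_
    simpa using integral_gaussian 1
  calc ∫ x in Ioi 0, exp (-x ^ 2 - c ^ 2 / x ^ 2)
      = ∫ x in Ioi 0, exp (-2 * c) * exp (-(x - c / x) ^ 2) := by
        refine setIntegral_congr_fun measurableSet_Ioi fun x hx => ?_
        have : x ≠ 0 := ne_of_gt hx
        rw [← exp_add]
        congr 1
        field_simp
        ring
    _ = √π / 2 * exp (-2 * c) := by
        rw [integral_const_mul, hgauss]
        ring

lemma rpow_neg_three_halves_div_sq {B x : ℝ} (hB : 0 < B) (hx : 0 < x) :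
    (B / x ^ 2) ^ (-(3 : ℝ) / 2) = x ^ 3 / (B * √B) := by
  have hsqrt : 0 < √B := sqrt_pos.2 hB
  have hsq : B / x ^ 2 = (√B / x) ^ (2 : ℝ) := by
    rw [rpow_two, div_pow, sq_sqrt hB.le]
  rw [hsq, ← rpow_mul (by positivity), show (2 : ℝ) * (-(3 : ℝ) / 2) = -(3 : ℕ) by norm_num,
    rpow_neg (by positivity), rpow_natCast]
  field_simp
  exact (sq_sqrt hB.le).symm

lemma integral_rpow_neg_three_halves_mul_exp {A B : ℝ} (hA : 0 < A) (hB : 0 < B) :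
    ∫ l in Ioi 0, l ^ (-(3 : ℝ) / 2) * exp (-(B / l) - A * l)
      = √π / √B * exp (-2 * √(A * B)) := by
  have hsqrt : 0 < √B := sqrt_pos.2 hB
  rw [← integral_comp_div_sq_Ioi hB]
  calc ∫ x in Ioi 0, (2 * B / x ^ 3) •
        ((B / x ^ 2) ^ (-(3 : ℝ) / 2) * exp (-(B / (B / x ^ 2)) - A * (B / x ^ 2)))
      = ∫ x in Ioi 0, 2 / √B * exp (-x ^ 2 - √(A * B) ^ 2 / x ^ 2) := by
        refine setIntegral_congr_fun measurableSet_Ioi fun x (hx : 0 < x) => ?_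
        rw [smul_eq_mul, rpow_neg_three_halves_div_sq hB hx, sq_sqrt (by positivity),
          div_div_cancel₀ hB.ne']
        field_simp
    _ = √π / √B * exp (-2 * √(A * B)) := by
        rw [integral_const_mul, integral_exp_neg_sq_sub_sq_div_sq_Ioi (sqrt_pos.2 (by positivity))]
        ring

/-- The explicit Schoenberg/subordination representation of the kernel
`φ̂_{a,b}(ξ,t)` as an average of Gaussians:
`exp(-t(-b+√(b²+16aπ²|ξ|²))/(2a))
  = ∫_0^∞ e^{-πλ|ξ|²} e^{tb/(2a)} (t/√a) e^{-λb²/(16πa)} e^{-πt²/(aλ)} λ^{-3/2} dλ`. -/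
theorem stmt5 (d : ℕ) (a b t : ℝ) (ha : 0 < a) (hb : 0 < b) (ht : 0 < t)
    (ξ : EuclideanSpace ℝ (Fin d)) :
    Real.exp (-t * ((-b + Real.sqrt (b ^ 2 + 16 * a * π ^ 2 * ‖ξ‖ ^ 2)) / (2 * a))) =
      ∫ l in Ioi (0 : ℝ),
        Real.exp (-(π * l * ‖ξ‖ ^ 2)) * (Real.exp (t * b / (2 * a)) * (t / Real.sqrt a) *
          Real.exp (-(l * b ^ 2 / (16 * π * a))) * Real.exp (-(π * t ^ 2 / (a * l))) *
          l ^ (-(3 : ℝ) / 2)) := by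
  have hπ : 0 < π := pi_pos
  have hsqrt_a : 0 < √a := sqrt_pos.2 ha
  have hsqrt_π : 0 < √π := sqrt_pos.2 hπ
  set A := π * ‖ξ‖ ^ 2 + b ^ 2 / (16 * π * a)
  set B := π * t ^ 2 / a
  have hsqrt_B : √B = √π * t / √a := by
    rw [sqrt_div (by positivity), sqrt_mul hπ.le, sqrt_sq ht.le]
  have hsqrt_AB : √(A * B) = t / (4 * a) * √(b ^ 2 + 16 * a * π ^ 2 * ‖ξ‖ ^ 2) := by
    rw [← sqrt_sq (by positivity : 0 ≤ t / (4 * a)), ← sqrt_mul (sq_nonneg _)]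
    congr 1
    simp only [A, B]
    field_simp
    ring
  symm
  calc _ = exp (t * b / (2 * a)) * (t / √a) *
        ∫ l in Ioi 0, l ^ (-(3 : ℝ) / 2) * exp (-(B / l) - A * l) := by
        rw [← integral_const_mul]
        refine setIntegral_congr_fun measurableSet_Ioi fun l hl => ?_
        have : l ≠ 0 := ne_of_gt hl
        rw [show -(B / l) - A * l = -(π * l * ‖ξ‖ ^ 2) + -(l * b ^ 2 / (16 * π * a)) +
          -(π * t ^ 2 / (a * l)) by simp only [A, B]; field_simp; ring, exp_add, exp_add]
        ring
    _ = exp (t * b / (2 * a)) * (t / √a) * (√π / √B * exp (-2 * √(A * B))) := by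
        rw [integral_rpow_neg_three_halves_mul_exp (by positivity) (by positivity)]
    _ = _ := by
        rw [hsqrt_B, hsqrt_AB]
        field_simp
        rw [← exp_add]
        congr 1
        field_simp
        ring
end
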